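/- Let K be an O-category, Φ : ω → K a chain of embeddings, and β : Φ ⇒ B an O-colimit (a cocone of embeddings with ⊔_n β_n ∘ β_n^p = id_B). If α : Φ ⇒ A is any cocone of embeddings, then the mediating morphism θ = ⊔_n α_n ∘ β_n^p : B → A is itself an embedding, with associated projection ⊔_n β_n ∘ α_n^p. -/
import Mathlib


open CategoryTheory OmegaCompletePartialOrder

universe v u

class OHom (K : Type u) [Category.{v} K] where
  homOrder : ∀ X Y : K, OmegaCompletePartialOrder (X ⟶ Y)

attribute [instance] OHom.homOrder

/-- An O-category: a category enriched in dcpos with continuous composition. -/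
class OCat (K : Type u) [Category.{v} K] extends OHom K where
  comp_mono : ∀ {X Y Z : K} {f f' : X ⟶ Y} {g g' : Y ⟶ Z},
    f ≤ f' → g ≤ g' → f ≫ g ≤ f' ≫ g'
  comp_cont_left : ∀ {X Y Z : K} (g : Y ⟶ Z) (c : Chain (X ⟶ Y))
    (hm : Monotone fun n => c n ≫ g),
    ωSup c ≫ g = ωSup ⟨fun n => c n ≫ g, hm⟩
  comp_cont_right : ∀ {X Y Z : K} (f : X ⟶ Y) (c : Chain (Y ⟶ Z))
    (hm : Monotone fun n => f ≫ c n),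
    f ≫ ωSup c = ωSup ⟨fun n => f ≫ c n, hm⟩

/-- If β : Φ ⇒ B is an O-colimit of an ω-chain of embeddings and
α : Φ ⇒ A is a cocone of embeddings, then the mediating morphism
θ = ⊔ₙ α_n ∘ β_n^p : B ⟶ A is an embedding with projection ⊔ₙ β_n ∘ α_n^p. -/
theorem mediating_is_embedding {K : Type u} [Category.{v} K] [OCat K]
    (Φ : ℕ → K) (e : ∀ n, Φ n ⟶ Φ (n + 1)) (ep : ∀ n, Φ (n + 1) ⟶ Φ n)
    (he₁ : ∀ n, e n ≫ ep n = 𝟙 (Φ n)) (he₂ : ∀ n, ep n ≫ e n ≤ 𝟙 (Φ (n + 1)))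
    (B : K) (β : ∀ n, Φ n ⟶ B) (βp : ∀ n, B ⟶ Φ n)
    (hβcocone : ∀ n, e n ≫ β (n + 1) = β n)
    (hβ₁ : ∀ n, β n ≫ βp n = 𝟙 (Φ n)) (hβ₂ : ∀ n, βp n ≫ β n ≤ 𝟙 B)
    (hβmono : Monotone fun n => βp n ≫ β n)
    (hβsup : ωSup ⟨fun n => βp n ≫ β n, hβmono⟩ = 𝟙 B)
    (A : K) (α : ∀ n, Φ n ⟶ A) (αp : ∀ n, A ⟶ Φ n)
    (hαcocone : ∀ n, e n ≫ α (n + 1) = α n)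
    (hα₁ : ∀ n, α n ≫ αp n = 𝟙 (Φ n)) (hα₂ : ∀ n, αp n ≫ α n ≤ 𝟙 A) :
    ∀ (h₁ : Monotone fun n => βp n ≫ α n) (h₂ : Monotone fun n => αp n ≫ β n),
      (ωSup ⟨fun n => βp n ≫ α n, h₁⟩ ≫ ωSup ⟨fun n => αp n ≫ β n, h₂⟩ = 𝟙 B) ∧
      (ωSup ⟨fun n => αp n ≫ β n, h₂⟩ ≫ ωSup ⟨fun n => βp n ≫ α n, h₁⟩ ≤ 𝟙 A) := by

  intro h₁ h₂
  have hcomp_le : ∀ {X Y Z : K} (u : Chain (X ⟶ Y)) (v : Chain (Y ⟶ Z)) (t : X ⟶ Z),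
      (∀ n m, u n ≫ v m ≤ t) → ωSup u ≫ ωSup v ≤ t := by
    intro X Y Z u v t h
    have hm : Monotone fun n => u n ≫ ωSup v :=
      fun a b hab => OCat.comp_mono (u.monotone hab) le_rfl
    rw [OCat.comp_cont_left (ωSup v) u hm]
    apply ωSup_le
    intro n
    have hm2 : Monotone fun m => u n ≫ v m :=
      fun a b hab => OCat.comp_mono le_rfl (v.monotone hab)
    show u n ≫ ωSup v ≤ t
    rw [OCat.comp_cont_right (u n) v hm2]
    exact ωSup_le _ _ fun m => h n m
  constructor
  · apply le_antisymm
    · apply hcomp_le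
      intro n m
      calc (βp n ≫ α n) ≫ (αp m ≫ β m)
          ≤ (βp (max n m) ≫ α (max n m)) ≫ (αp (max n m) ≫ β (max n m)) :=
            OCat.comp_mono (h₁ (le_max_left n m)) (h₂ (le_max_right n m))
        _ = βp (max n m) ≫ β (max n m) := by
            rw [Category.assoc, ← Category.assoc (α _), hα₁, Category.id_comp]
        _ ≤ ωSup ⟨fun n => βp n ≫ β n, hβmono⟩ := le_ωSup ⟨fun n => βp n ≫ β n, hβmono⟩ (max n m)
        _ = 𝟙 B := hβsup
    · rw [← hβsup]
      apply ωSup_le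
      intro n
      show βp n ≫ β n ≤ _
      have heq : βp n ≫ β n = (βp n ≫ α n) ≫ (αp n ≫ β n) := by
        rw [Category.assoc, ← Category.assoc (α n), hα₁, Category.id_comp]
      rw [heq]
      exact OCat.comp_mono (le_ωSup ⟨fun n => βp n ≫ α n, h₁⟩ n)
        (le_ωSup ⟨fun n => αp n ≫ β n, h₂⟩ n)
  · apply hcomp_le
    intro n m
    calc (αp n ≫ β n) ≫ (βp m ≫ α m)
        ≤ (αp (max n m) ≫ β (max n m)) ≫ (βp (max n m) ≫ α (max n m)) :=
          OCat.comp_mono (h₂ (le_max_left n m)) (h₁ (le_max_right n m))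
      _ = αp (max n m) ≫ α (max n m) := by
          rw [Category.assoc, ← Category.assoc (β _), hβ₁, Category.id_comp]
      _ ≤ 𝟙 A := hα₂ _
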